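/- arXiv:1612.01829 — 7 statements merged into one kernel-verified Lean document; each statement's English description precedes it below -/
import Mathlib

section
/- Let ε = c/d ∈ (0,1) with c, d coprime positive integers, and let k = −⌊log_{1+ε}(ε)⌋. If p(x) = b₀ + b₁x + … + b_k x^k is a nonzero polynomial with integer coefficients that has 1+ε as a root, then its lowest-order nonzero coefficient bᵢ satisfies |bᵢ| > 1/ε. -/
lemma key_dvd (q : Polynomial ℤ) (a b : ℤ) (hb : (b : ℝ) ≠ 0) (hcop : IsCoprime a b)
    (h : Polynomial.aeval ((a : ℝ) / b) q = 0) : a ∣ q.coeff 0 := by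
  have h2 : Polynomial.eval₂ (Int.castRingHom ℝ) ((b : ℝ) * ((a : ℝ) / b))
      (q.scaleRoots b) = 0 := Polynomial.scaleRoots_eval₂_eq_zero _ h
  rw [mul_div_cancel₀ _ hb] at h2
  have h4 : (q.scaleRoots b).eval a = 0 := by
    have h3 := Polynomial.eval₂_at_apply (Int.castRingHom ℝ) a (p := q.scaleRoots b)
    rw [show ((Int.castRingHom ℝ) a) = (a : ℝ) from rfl] at h3
    rw [h3] at h2
    have h2' : (((q.scaleRoots b).eval a : ℤ) : ℝ) = 0 := by simpa using h2
    exact_mod_cast h2'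
  have h5 : a ∣ (q.scaleRoots b).coeff 0 := by
    have h6 := Polynomial.sub_dvd_eval_sub a 0 (q.scaleRoots b)
    rw [sub_zero, h4, zero_sub] at h6
    rw [Polynomial.coeff_zero_eq_eval_zero]
    exact dvd_neg.mp h6
  rw [Polynomial.coeff_scaleRoots, tsub_zero] at h5
  exact (hcop.pow_right).dvd_of_dvd_mul_right h5

theorem stmt8 (c d : ℕ) (hc : 0 < c) (hcd : c < d) (hcop : Nat.Coprime c d)
    (ε : ℝ) (hε : ε = (c : ℝ) / d)
    (p : Polynomial ℤ) (hp : p ≠ 0)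
    (hdeg : (p.natDegree : ℤ) ≤ -⌊Real.logb (1 + ε) ε⌋)
    (hroot : Polynomial.aeval (1 + ε) p = 0) :
    (1 : ℝ) / ε < |((p.coeff p.natTrailingDegree : ℤ) : ℝ)| := by
  have hd : (0:ℝ) < d := by exact_mod_cast hc.trans hcd
  have hcr : (0:ℝ) < c := by exact_mod_cast hc
  set i := p.natTrailingDegree with hi
  set b := p.coeff i with hb
  have hbne : b ≠ 0 := by
    rw [hb, hi]
    exact fun h => hp (Polynomial.trailingCoeff_eq_zero.mp h)
  -- factor out X^i
  obtain ⟨q, hq⟩ : (Polynomial.X : Polynomial ℤ) ^ i ∣ p := by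
    rw [Polynomial.X_pow_dvd_iff]
    exact fun j hj => Polynomial.coeff_eq_zero_of_lt_natTrailingDegree hj
  have hq0 : q.coeff 0 = b := by
    rw [hb, hq]
    have h7 := Polynomial.coeff_X_pow_mul q i 0
    rw [zero_add] at h7
    exact h7.symm
  have hεpos : 0 < ε := by rw [hε]; positivity
  have h1ε : (0:ℝ) < 1 + ε := by linarith
  have hqroot : Polynomial.aeval (1 + ε) q = 0 := by
    rw [hq, map_mul, map_pow, Polynomial.aeval_X] at hroot
    rcases mul_eq_zero.mp hroot with h | h
    · exact absurd h (pow_ne_zero _ (ne_of_gt h1ε))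
    · exact h
  have hrepr : (1 : ℝ) + ε = ((((c : ℤ) + d) : ℤ) : ℝ) / ((d : ℤ) : ℝ) := by
    rw [hε]
    push_cast
    field_simp
    ring
  have hcop2 : IsCoprime ((c : ℤ) + d) (d : ℤ) := by
    have h8 : ((c:ℤ) + d) = ((c + d : ℕ) : ℤ) := by push_cast; ring
    rw [h8, Int.isCoprime_iff_gcd_eq_one, Int.gcd_natCast_natCast]
    exact Nat.coprime_add_self_left.mpr hcop
  have hdvd : ((c : ℤ) + d) ∣ b := by
    rw [← hq0]
    apply key_dvd q _ _ (by exact_mod_cast hd.ne') hcop2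
    rw [← hrepr]
    exact hqroot
  have hle : ((c : ℤ) + d) ≤ |b| := by
    apply Int.le_of_dvd (abs_pos.mpr hbne)
    exact (dvd_abs _ _).mpr hdvd
  have hle' : ((c : ℝ) + d) ≤ |((b : ℤ) : ℝ)| := by
    exact_mod_cast hle
  have : (1:ℝ) / ε = (d : ℝ) / c := by rw [hε]; field_simp
  rw [this]
  have hlt : (d : ℝ) / c < (c : ℝ) + d := by
    rw [div_lt_iff₀ hcr]
    have h1 : (1:ℝ) ≤ c := by exact_mod_cast hc
    nlinarith
  linarith
end

section
/- Let ε ∈ ℚ ∩ (0,1). If C₁ and C₂ are two distinct finite multisets of real numbers, each element of the form (1+ε)^i for an integer i with ε ≤ (1+ε)^i ≤ 1, and the sum of each multiset lies in [ε, 1], then the sums of C₁ and C₂ are different. -/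
/-!
Write `ε = p / d` in lowest terms, so that `q = (1 + ε)⁻¹ = d / (p + d)` with `p + d` and `d`
coprime. Every element is `q ^ n` with `n : ℕ`, and `ε < q ^ n` (equality would give
`d ^ (n + 1) = p (p + d) ^ n`, forcing `d = 1`); as the sum is at most `1`, each power therefore
occurs fewer than `d` times. Equal sums then give `∑ g n * q ^ n = 0` with `|g n| < d`, i.e.
`∑ g n * d ^ n * (p + d) ^ (N - n) = 0`: reducing modulo `d` shows `g 0 = 0`, and dividing by `d`
lets us continue with the remaining coefficients.
-/

open Finset

theorem Int.eq_zero_of_sum_mul_pow_mul_pow_eq_zero {P Q : ℤ} (hPQ : IsCoprime P Q) {N : ℕ}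
    {g : ℕ → ℤ} (hg : ∀ j, |g j| < Q)
    (hsum : ∑ j ∈ Finset.range N, g j * Q ^ j * P ^ (N - j) = 0) : ∀ j < N, g j = 0 := by
  induction N generalizing g with
  | zero => simp
  | succ N ih =>
    rw [sum_range_succ'] at hsum
    simp only [Nat.add_sub_add_right, pow_zero, mul_one, Nat.sub_zero] at hsum
    have hQ : Q ∣ ∑ j ∈ Finset.range N, g (j + 1) * Q ^ (j + 1) * P ^ (N - j) :=
      dvd_sum fun j _ => ((dvd_pow_self Q j.succ_ne_zero).mul_left _).mul_right _
    have hg0 : g 0 = 0 := by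
      refine Int.eq_zero_of_abs_lt_dvd ?_ (hg 0)
      refine (hPQ.symm.pow_right (n := N + 1)).dvd_of_dvd_mul_right ?_
      exact (dvd_add_right hQ).mp (hsum ▸ dvd_zero Q)
    have htail : ∑ j ∈ Finset.range N, g (j + 1) * Q ^ j * P ^ (N - j) = 0 := by
      have hQ0 : Q ≠ 0 := ((abs_nonneg _).trans_lt (hg 0)).ne'
      refine (mul_eq_zero.mp ?_).resolve_left hQ0
      rw [mul_sum, ← hsum, hg0, zero_mul, add_zero]
      exact sum_congr rfl fun j _ => by ring
    intro j hj
    cases j with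
    | zero => exact hg0
    | succ j => exact ih (fun j => hg (j + 1)) htail j (by omega)

theorem eq_zero_of_sum_mul_div_pow_eq_zero {K : Type*} [Field K] [CharZero K] {P Q : ℤ}
    (hP : P ≠ 0) (hPQ : IsCoprime P Q) {N : ℕ} {g : ℕ → ℤ} (hg : ∀ j, |g j| < Q)
    (hsum : ∑ j ∈ range N, (g j : K) * ((Q : K) / P) ^ j = 0) : ∀ j < N, g j = 0 := by
  refine Int.eq_zero_of_sum_mul_pow_mul_pow_eq_zero hPQ hg (Int.cast_injective (α := K) ?_)
  have hPK : (P : K) ≠ 0 := Int.cast_ne_zero.mpr hP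
  calc ((∑ j ∈ range N, g j * Q ^ j * P ^ (N - j) : ℤ) : K)
      = (P : K) ^ N * ∑ j ∈ range N, (g j : K) * ((Q : K) / P) ^ j := by
        push_cast
        rw [mul_sum]
        refine sum_congr rfl fun j hj => ?_
        rw [← pow_mul_pow_sub (P : K) (mem_range.mp hj).le, div_pow]
        field_simp
    _ = ((0 : ℤ) : K) := by rw [hsum, mul_zero, Int.cast_zero]

theorem Multiset.sum_map_eq_sum_range_count {M : Type*} [AddCommMonoid M] {s : Multiset ℕ}
    {N : ℕ} (hs : s.toFinset ⊆ Finset.range N) (f : ℕ → M) :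
    (s.map f).sum = ∑ n ∈ Finset.range N, s.count n • f n := by
  rw [Finset.sum_multiset_map_count]
  exact sum_subset hs fun n _ hn => by rw [count_eq_zero.mpr (by simpa using hn), zero_smul]

theorem Multiset.eq_of_sum_map_div_pow_eq {K : Type*} [Field K] [CharZero K] {P Q : ℤ}
    (hP : P ≠ 0) (hPQ : IsCoprime P Q) {s t : Multiset ℕ} (hs : ∀ n, (s.count n : ℤ) < Q)
    (ht : ∀ n, (t.count n : ℤ) < Q)
    (h : (s.map fun n => ((Q : K) / P) ^ n).sum = (t.map fun n => ((Q : K) / P) ^ n).sum) :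
    s = t := by
  obtain ⟨N, hN⟩ := (s.toFinset ∪ t.toFinset).exists_nat_subset_range
  have hdiff : ∀ n < N, (s.count n : ℤ) - t.count n = 0 := by
    refine eq_zero_of_sum_mul_div_pow_eq_zero (K := K) hP hPQ (fun n => ?_) ?_
    · rw [abs_sub_lt_iff]
      constructor <;> linarith [hs n, ht n, (t.count n).cast_nonneg (α := ℤ),
        (s.count n).cast_nonneg (α := ℤ)]
    · rw [sum_map_eq_sum_range_count (union_subset_left hN),
        sum_map_eq_sum_range_count (union_subset_right hN), ← sub_eq_zero, ← sum_sub_distrib] at h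
      rw [← h]
      refine sum_congr rfl fun n _ => ?_
      push_cast
      rw [nsmul_eq_mul, nsmul_eq_mul, sub_mul]
  ext n
  by_cases hn : n < N
  · exact_mod_cast sub_eq_zero.mp (hdiff n hn)
  · have hnot : n ∉ s.toFinset ∪ t.toFinset := fun h => hn (Finset.mem_range.mp (hN h))
    simp only [Finset.mem_union, mem_toFinset, not_or] at hnot
    rw [count_eq_zero.mpr hnot.1, count_eq_zero.mpr hnot.2]

theorem Multiset.count_nsmul_le_sum_map {α M : Type*} [DecidableEq α] [AddCommMonoid M]
    [PartialOrder M] [IsOrderedAddMonoid M] {s : Multiset α} {f : α → M}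
    (hf : ∀ x ∈ s, 0 ≤ f x) (a : α) : s.count a • f a ≤ (s.map f).sum := by
  obtain ⟨u, hu⟩ := le_iff_exists_add.mp (le_count_iff_replicate_le.mp (le_refl (s.count a)))
  have hu0 : 0 ≤ (u.map f).sum := sum_nonneg fun _ hx => by
    obtain ⟨y, hy, rfl⟩ := mem_map.mp hx
    exact hf y (hu ▸ mem_add.mpr (Or.inr hy))
  calc s.count a • f a = ((replicate (s.count a) a).map f).sum := by
        rw [map_replicate, sum_replicate]
    _ ≤ ((replicate (s.count a) a).map f).sum + (u.map f).sum := le_add_of_nonneg_right hu0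
    _ = (s.map f).sum := by rw [← sum_add, ← map_add, ← hu]

theorem exists_inv_pow_eq_zpow {K : Type*} [Field K] [LinearOrder K] [IsStrictOrderedRing K]
    {a : K} (ha : 1 < a) {i : ℤ} (hi : a ^ i ≤ 1) : ∃ n : ℕ, a⁻¹ ^ n = a ^ i := by
  have : i ≤ 0 := not_lt.mp fun h => hi.not_gt ((one_lt_zpow_iff_right₀ ha).mpr h)
  refine ⟨(-i).toNat, ?_⟩
  rw [inv_pow, ← zpow_natCast, Int.toNat_of_nonneg (by omega), ← zpow_neg, neg_neg]

theorem Rat.isCoprime_num_add_den_den (ε : ℚ) : IsCoprime (ε.num + ε.den) (ε.den : ℤ) := by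
  simpa using ε.isCoprime_num_den.add_mul_left_left 1

theorem Rat.num_add_den_pos {ε : ℚ} (hε : 0 ≤ ε) : 0 < ε.num + ε.den := by
  have := Rat.num_nonneg.mpr hε
  have := ε.den_pos
  omega

theorem Rat.inv_one_add_eq {K : Type*} [Field K] [CharZero K] (ε : ℚ) :
    (1 + (ε : K))⁻¹ = ((ε.den : ℤ) : K) / ((ε.num + ε.den : ℤ) : K) := by
  rw [Rat.cast_def, one_add_div (Nat.cast_ne_zero.mpr ε.den_nz), inv_div, add_comm]
  push_cast
  rfl

theorem Rat.one_lt_den {ε : ℚ} (hε0 : 0 < ε) (hε1 : ε < 1) : 1 < ε.den := by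
  by_contra! h
  have : ε = ε.num := (Rat.coe_int_num_of_den_eq_one (by have := ε.den_pos; omega)).symm
  have h0 : 0 < ε.num := Rat.num_pos.mpr hε0
  have h1 : (ε.num : ℚ) < 1 := this ▸ hε1
  norm_cast at h1
  omega

theorem Rat.inv_one_add_pow_ne_self {K : Type*} [Field K] [CharZero K] {ε : ℚ} (hε0 : 0 < ε)
    (hε1 : ε < 1) (n : ℕ) : (1 + (ε : K))⁻¹ ^ n ≠ ε := by
  intro h
  have hden : (ε.den : ℤ) ^ (n + 1) = ε.num * (ε.num + ε.den) ^ n := by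
    have hpd : ((ε.num + ε.den : ℤ) : K) ≠ 0 := by exact_mod_cast (Rat.num_add_den_pos hε0.le).ne'
    have hd : (ε.den : K) ≠ 0 := Nat.cast_ne_zero.mpr ε.den_nz
    rw [Rat.inv_one_add_eq, div_pow, Rat.cast_def, div_eq_div_iff (pow_ne_zero _ hpd) hd] at h
    exact_mod_cast h
  have hcop : IsCoprime (ε.num * (ε.num + ε.den) ^ n) (ε.den : ℤ) :=
    ε.isCoprime_num_den.mul_left ε.isCoprime_num_add_den_den.pow_left
  rw [← hden, pow_succ] at hcop
  have := Int.isUnit_iff.mp (isCoprime_self.mp hcop.of_mul_left_right)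
  have := Rat.one_lt_den hε0 hε1
  omega

theorem Multiset.count_lt_den {K α : Type*} [Field K] [LinearOrder K] [IsStrictOrderedRing K]
    [DecidableEq α] {ε : ℚ} (hε : 0 < ε) {s : Multiset α} {f : α → K} (hs : (s.map f).sum ≤ 1)
    (hεs : ∀ a ∈ s, (ε : K) < f a) (a : α) : s.count a < ε.den := by
  by_cases ha : a ∈ s
  · have hf : ∀ x ∈ s, 0 ≤ f x := fun x hx => (Rat.cast_pos.mpr hε).le.trans (hεs x hx).le
    have hK : (s.count a : K) * ε < 1 := calc
      (s.count a : K) * ε < s.count a * f a :=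
          mul_lt_mul_of_pos_left (hεs a ha) (Nat.cast_pos.mpr (count_pos.mpr ha))
      _ = s.count a • f a := (nsmul_eq_mul _ _).symm
      _ ≤ (s.map f).sum := count_nsmul_le_sum_map hf a
      _ ≤ 1 := hs
    have hQ : (s.count a : ℚ) * ε < 1 := by exact_mod_cast hK
    rw [← Rat.num_div_den ε, mul_div_assoc', div_lt_one (by positivity)] at hQ
    have hZ : (s.count a : ℤ) * ε.num < ε.den := by exact_mod_cast hQ
    have := Rat.num_pos.mpr hε
    zify
    nlinarith
  · rw [count_eq_zero.mpr ha]
    exact ε.den_pos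

theorem exists_map_inv_one_add_pow_eq {K : Type*} [Field K] [LinearOrder K]
    [IsStrictOrderedRing K] {ε : ℚ} (hε0 : 0 < ε) (hε1 : ε < 1) {C : Multiset K}
    (hC : ∀ x ∈ C, ∃ i : ℤ, x = (1 + (ε : K)) ^ i ∧ (ε : K) ≤ x ∧ x ≤ 1) :
    ∃ s : Multiset ℕ,
      s.map ((1 + (ε : K))⁻¹ ^ ·) = C ∧ ∀ n ∈ s, (ε : K) < (1 + (ε : K))⁻¹ ^ n := by
  have hx (x : K) (hx : x ∈ C) : ∃ n : ℕ, (1 + (ε : K))⁻¹ ^ n = x ∧ (ε : K) < x := by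
    obtain ⟨i, rfl, hεx, hx1⟩ := hC x hx
    obtain ⟨n, hn⟩ := exists_inv_pow_eq_zpow (lt_add_of_pos_right 1 (Rat.cast_pos.mpr hε0)) hx1
    exact ⟨n, hn, hεx.lt_of_ne (hn ▸ (Rat.inv_one_add_pow_ne_self hε0 hε1 n).symm)⟩
  choose! k hk using hx
  refine ⟨C.map k, ?_, ?_⟩
  · rw [Multiset.map_map]
    conv_rhs => rw [← C.map_id]
    exact Multiset.map_congr rfl fun x hx => (hk x hx).1
  · simp only [Multiset.mem_map, forall_exists_index, and_imp]
    rintro _ x hx rfl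
    rw [(hk x hx).1]
    exact (hk x hx).2

theorem stmt9_general (ε : ℚ) (hε0 : 0 < ε) (hε1 : ε < 1) (C₁ C₂ : Multiset ℝ)
    (h1 : ∀ x ∈ C₁, ∃ i : ℤ, x = (1 + (ε : ℝ))^i ∧ (ε : ℝ) ≤ x ∧ x ≤ 1)
    (h2 : ∀ x ∈ C₂, ∃ i : ℤ, x = (1 + (ε : ℝ))^i ∧ (ε : ℝ) ≤ x ∧ x ≤ 1)
    (hs1u : C₁.sum ≤ 1)
    (hs2u : C₂.sum ≤ 1)
    (hne : C₁ ≠ C₂) : C₁.sum ≠ C₂.sum := by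
  obtain ⟨s₁, rfl, hs₁⟩ := exists_map_inv_one_add_pow_eq hε0 hε1 h1
  obtain ⟨s₂, rfl, hs₂⟩ := exists_map_inv_one_add_pow_eq hε0 hε1 h2
  have hcount {s : Multiset ℕ} (hsum : (s.map ((1 + (ε : ℝ))⁻¹ ^ ·)).sum ≤ 1)
      (hs : ∀ n ∈ s, (ε : ℝ) < (1 + (ε : ℝ))⁻¹ ^ n) (n : ℕ) : (s.count n : ℤ) < ε.den := by
    exact_mod_cast Multiset.count_lt_den hε0 hsum hs n
  intro hsum
  simp only [Rat.inv_one_add_eq] at hsum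
  exact hne (congrArg _ (Multiset.eq_of_sum_map_div_pow_eq (Rat.num_add_den_pos hε0.le).ne'
    ε.isCoprime_num_add_den_den (hcount hs1u hs₁) (hcount hs2u hs₂) hsum))

theorem stmt9 (ε : ℚ) (hε0 : 0 < ε) (hε1 : ε < 1) (C₁ C₂ : Multiset ℝ)
    (h1 : ∀ x ∈ C₁, ∃ i : ℤ, x = (1 + (ε : ℝ))^i ∧ (ε : ℝ) ≤ x ∧ x ≤ 1)
    (h2 : ∀ x ∈ C₂, ∃ i : ℤ, x = (1 + (ε : ℝ))^i ∧ (ε : ℝ) ≤ x ∧ x ≤ 1)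
    (hs1l : (ε : ℝ) ≤ C₁.sum) (hs1u : C₁.sum ≤ 1)
    (hs2l : (ε : ℝ) ≤ C₂.sum) (hs2u : C₂.sum ≤ 1)
    (hne : C₁ ≠ C₂) : C₁.sum ≠ C₂.sum :=
  stmt9_general ε hε0 hε1 C₁ C₂ h1 h2 hs1u hs2u hne
end

section
/- Let S_A be an α-approximate schedule for a machine covering instance (α ≥ 1), and let k₁ ≤ k₂ be constants with k₁ ≥ 1, and 0 < ε < 1/(2k₂α). If S is a schedule such that (1) jobs with size ≥ k₁·ε·OPT are assigned exactly as in S_A, and (2) every machine receiving a job of size < k₁·ε·OPT has load at most ℓ_min(S) + k₂·ε·OPT, then ℓ_min(S) ≥ OPT/(α + 2k₂α²ε). -/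
/-- Load of machine `i` under schedule `S` with job sizes `p`. -/
def mload {J M : Type*} [Fintype J] [DecidableEq M] (p : J → ℝ) (S : J → M) (i : M) : ℝ :=
  ∑ j, if S j = i then p j else 0

/-- Minimum machine load of schedule `S`. -/
noncomputable def mlmin {J M : Type*} [Fintype J] [Fintype M] [Nonempty M] [DecidableEq M]
    (p : J → ℝ) (S : J → M) : ℝ :=
  Finset.univ.inf' Finset.univ_nonempty (mload p S)

/-- The optimal machine covering value: maximum over schedules of the minimum load. -/
noncomputable def mOPT {J : Type*} (M : Type*) [Fintype J] [DecidableEq J] [Fintype M]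
    [Nonempty M] [DecidableEq M] (p : J → ℝ) : ℝ :=
  Finset.univ.sup' Finset.univ_nonempty (fun S : J → M => mlmin p S)

theorem stmt12 {J M : Type*} [Fintype J] [DecidableEq J] [Fintype M] [Nonempty M]
    [DecidableEq M] (p : J → ℝ) (hp : ∀ j, 0 ≤ p j)
    (α k₁ k₂ ε : ℝ) (hα : 1 ≤ α) (hk1 : 1 ≤ k₁) (hk12 : k₁ ≤ k₂)
    (hε0 : 0 < ε) (hεub : ε < 1 / (2 * k₂ * α))
    (SA S : J → M)
    (hSA : mOPT M p / α ≤ mlmin p SA)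
    (h1 : ∀ j, k₁ * ε * mOPT M p ≤ p j → S j = SA j)
    (h2 : ∀ i, (∃ j, S j = i ∧ p j < k₁ * ε * mOPT M p) →
      mload p S i ≤ mlmin p S + k₂ * ε * mOPT M p) :
    mOPT M p / (α + 2 * k₂ * α ^ 2 * ε) ≤ mlmin p S := by
  classical
  set O := mOPT M p with hOdef
  have hα0 : (0:ℝ) < α := lt_of_lt_of_le one_pos hα
  have hk2 : (0:ℝ) < k₂ := lt_of_lt_of_le one_pos (hk1.trans hk12)
  have hden : 0 < α + 2 * k₂ * α ^ 2 * ε := by positivity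
  have hεα : 2 * k₂ * α * ε < 1 := by
    have h2' : (0:ℝ) < 2 * k₂ * α := by positivity
    rw [lt_div_iff₀ h2'] at hεub
    linarith
  have hload0 : ∀ (T : J → M) (i : M), 0 ≤ mload p T i := by
    intro T i
    apply Finset.sum_nonneg
    intro j _
    split <;> [exact hp j; exact le_rfl]
  have hlmin0 : ∀ (T : J → M), 0 ≤ mlmin p T := by
    intro T
    apply Finset.le_inf'
    intro i _
    exact hload0 T i
  have hO0 : 0 ≤ O := le_trans (hlmin0 SA) (Finset.le_sup' _ (Finset.mem_univ SA))
  have hL0 : 0 ≤ mlmin p S := hlmin0 S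
  have hlmin_le : ∀ (T : J → M) (i : M), mlmin p T ≤ mload p T i := by
    intro T i
    exact Finset.inf'_le _ (Finset.mem_univ i)
  -- key final computation
  have hfinal : O / α ≤ mlmin p S + k₂ * ε * O → O / (α + 2 * k₂ * α ^ 2 * ε) ≤ mlmin p S := by
    intro h
    rw [div_le_iff₀ hα0] at h
    rw [div_le_iff₀ hden]
    nlinarith [mul_nonneg (mul_nonneg hk2.le hε0.le) hα0.le, hL0, hO0,
      mul_nonneg hL0 hα0.le, mul_nonneg (mul_nonneg (mul_nonneg hk2.le hε0.le) hα0.le) hO0]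
  set P : M → Prop := fun i => ∃ j, S j = i ∧ p j < k₁ * ε * O with hP
  by_cases hA : (Finset.univ.filter P).Nonempty
  · -- some machine has a small job
    have hB : ∀ i ∈ Finset.univ.filter (fun i => ¬ P i), mload p S i ≤ mload p SA i := by
      intro i hi
      have hnP : ¬ P i := (Finset.mem_filter.1 hi).2
      apply Finset.sum_le_sum
      intro j _
      by_cases hj : S j = i
      · have hbig : k₁ * ε * O ≤ p j := by
          by_contra hc
          push_neg at hc
          exact hnP ⟨j, hj, hc⟩
        have : SA j = i := (h1 j hbig).symm.trans hj
        simp [hj, this]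
      · simp only [hj, if_false]
        split <;> [exact hp j; exact le_rfl]
    have hsum : ∀ T : J → M, ∑ i, mload p T i = ∑ j, p j := by
      intro T
      unfold mload
      rw [Finset.sum_comm]
      simp [Finset.sum_ite_eq]
    have hsplitS := Finset.sum_filter_add_sum_filter_not Finset.univ P (mload p S)
    have hsplitSA := Finset.sum_filter_add_sum_filter_not Finset.univ P (mload p SA)
    have hAkey : ∑ i ∈ Finset.univ.filter P, mload p SA i
        ≤ ∑ i ∈ Finset.univ.filter P, mload p S i := by
      have := Finset.sum_le_sum hB
      have hS := hsum S
      have hSA' := hsum SA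
      linarith
    have hlow : (Finset.univ.filter P).card • (O / α)
        ≤ ∑ i ∈ Finset.univ.filter P, mload p SA i := by
      apply Finset.card_nsmul_le_sum
      intro i _
      exact le_trans hSA (hlmin_le SA i)
    have hhigh : ∑ i ∈ Finset.univ.filter P, mload p S i
        ≤ (Finset.univ.filter P).card • (mlmin p S + k₂ * ε * O) := by
      apply Finset.sum_le_card_nsmul
      intro i hi
      exact h2 i (Finset.mem_filter.1 hi).2
    have hcard : (0:ℝ) < ((Finset.univ.filter P).card : ℝ) := by
      exact_mod_cast Finset.card_pos.2 hA
    rw [nsmul_eq_mul] at hlow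
    rw [nsmul_eq_mul] at hhigh
    apply hfinal
    have : ((Finset.univ.filter P).card : ℝ) * (O / α)
        ≤ ((Finset.univ.filter P).card : ℝ) * (mlmin p S + k₂ * ε * O) := by
      linarith
    exact le_of_mul_le_mul_left this hcard
  · -- no small jobs at all
    have hbig : ∀ j, k₁ * ε * O ≤ p j := by
      intro j
      by_contra hc
      push_neg at hc
      exact hA ⟨S j, Finset.mem_filter.2 ⟨Finset.mem_univ _, j, rfl, hc⟩⟩
    have hSeq : S = SA := funext fun j => h1 j (hbig j)
    rw [hSeq]
    refine le_trans ?_ hSA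
    apply div_le_div_of_nonneg_left hO0 hα0
    nlinarith [mul_pos (mul_pos hk2 (pow_pos hα0 2)) hε0]
end

section
/- Let q₁ > q₂ > … > q_N be the elements of P̃ = {2^i(1+kε) : ℓ ≤ i ≤ u, 0 ≤ k ≤ 1/ε − 1} sorted decreasingly, with the convention q_{N+1} = 0. If q_{i₁}, …, q_{i_k} ∈ P̃ satisfy Σⱼ q_{iⱼ} ∈ (q_{s+1}, q_s] for some s, then Σⱼ q_{iⱼ+1} ≤ Σⱼ q_{iⱼ} − (ε/4)·q_{s+1}, where q_{iⱼ+1} denotes the next smaller element of P̃ after q_{iⱼ} (or 0 if q_{iⱼ} is the smallest). -/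
/-- The set of rounded job sizes `2^i (1 + k ε)` for `ℓ ≤ i ≤ u`, `0 ≤ k < d = 1/ε`. -/
noncomputable def Ptil (d : ℕ) (ℓ u : ℤ) : Finset ℝ :=
  ((Finset.Icc ℓ u) ×ˢ Finset.range d).image
    (fun pr : ℤ × ℕ => (2:ℝ)^pr.1 * (1 + pr.2 * (1 / (d:ℝ))))

open Classical in
/-- The next smaller element of `Ptil` below `q` (or `0` if none exists). -/
noncomputable def nxt (d : ℕ) (ℓ u : ℤ) (q : ℝ) : ℝ :=
  if h : ((Ptil d ℓ u).filter (fun x => x < q)).Nonempty then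
    ((Ptil d ℓ u).filter (fun x => x < q)).max' h
  else 0

lemma Ptil_pos {d : ℕ} {ℓ u : ℤ} {q : ℝ} (hq : q ∈ Ptil d ℓ u) : 0 < q := by
  simp only [Ptil, Finset.mem_image, Finset.mem_product, Finset.mem_range,
    Finset.mem_Icc] at hq
  obtain ⟨⟨i, kk⟩, ⟨hi, hk⟩, rfl⟩ := hq
  have h1 : (0:ℝ) < 2 ^ i := zpow_pos (by norm_num) i
  have h2 : (0:ℝ) ≤ (kk:ℝ) * (1/(d:ℝ)) := by positivity
  nlinarith

set_option maxHeartbeats 1000000 in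
lemma nxt_le {d : ℕ} (hd : 1 < d) {ℓ u : ℤ} {q : ℝ} (hq : q ∈ Ptil d ℓ u) :
    nxt d ℓ u q ≤ q - 1/(d:ℝ)/4 * q := by
  have hd0 : (0:ℝ) < d := by exact_mod_cast Nat.lt_of_lt_of_le Nat.zero_lt_one hd.le
  have hqpos := Ptil_pos hq
  have hε : 0 < 1/(d:ℝ) := by positivity
  have hdinv : (d:ℝ) * (1/(d:ℝ)) = 1 := by field_simp
  rw [nxt]
  split_ifs with h
  · apply Finset.max'_le
    intro x hx
    rw [Finset.mem_filter] at hx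
    obtain ⟨hxP, hxq⟩ := hx
    clear h
    simp only [Ptil, Finset.mem_image, Finset.mem_product, Finset.mem_range,
      Finset.mem_Icc] at hq hxP
    obtain ⟨⟨i, k⟩, ⟨hi, hk⟩, hqe⟩ := hq
    obtain ⟨⟨i', k'⟩, ⟨hi', hk'⟩, hxe⟩ := hxP
    dsimp only at hqe hxe hi hi' hk hk'
    have hpi : (0:ℝ) < 2 ^ i := zpow_pos (by norm_num) i
    have hpi1 : (0:ℝ) < 2 ^ (i-1) := zpow_pos (by norm_num) (i-1)
    have hpi' : (0:ℝ) < 2 ^ i' := zpow_pos (by norm_num) i'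
    have h2 : (2:ℝ)^(i-1) * 2 = 2^i := by
      rw [← zpow_add_one₀ (by norm_num : (2:ℝ) ≠ 0) (i-1)]
      norm_num
    have hkd : (k:ℝ) < d := by exact_mod_cast hk
    have hkε : (k:ℝ) * (1/(d:ℝ)) < 1 := by nlinarith
    have hkε0 : 0 ≤ (k:ℝ) * (1/(d:ℝ)) := by positivity
    have main : x ≤ q - (1/(d:ℝ)) * 2^(i-1) := by
      rcases lt_trichotomy i' i with hlt | heq | hgt
      · -- i' ≤ i - 1
        have h1' : (2:ℝ)^i' ≤ 2^(i-1) := by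
          apply zpow_le_zpow_right₀ (by norm_num) (by omega)
        have hk'd : (k':ℝ) + 1 ≤ d := by exact_mod_cast hk'
        have hk'0 : (0:ℝ) ≤ (k':ℝ) * (1/(d:ℝ)) := by positivity
        have s1 : x ≤ (2:ℝ)^(i-1) * (1 + (k':ℝ) * (1/(d:ℝ))) := by
          rw [← hxe]; exact mul_le_mul_of_nonneg_right h1' (by nlinarith)
        have s2 : (2:ℝ)^(i-1) * (1 + (k':ℝ) * (1/(d:ℝ))) ≤ 2^(i-1) * (1 + ((d:ℝ)-1) * (1/(d:ℝ))) := by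
          apply mul_le_mul_of_nonneg_left _ hpi1.le
          nlinarith
        have s3 : (2:ℝ)^(i-1) * (1 + ((d:ℝ)-1) * (1/(d:ℝ))) = 2^i - (1/(d:ℝ)) * 2^(i-1) := by
          have : ((d:ℝ)-1) * (1/(d:ℝ)) = 1 - 1/(d:ℝ) := by nlinarith
          rw [this]; linarith [h2]
        have s4 : (2:ℝ)^i ≤ q := by rw [← hqe]; nlinarith
        linarith
      · -- i' = i : then k' < k
        subst heq
        have hkk' : (k':ℝ) < k := by
          by_contra hcon
          push_neg at hcon
          have : q ≤ x := by
            rw [← hqe, ← hxe]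
            nlinarith [mul_le_mul_of_nonneg_left
              (mul_le_mul_of_nonneg_right hcon hε.le) hpi'.le]
          linarith
        have hkk'' : (k':ℝ) + 1 ≤ k := by
          have : k' < k := by exact_mod_cast hkk'
          exact_mod_cast this
        have : q - x = (2:ℝ)^i' * (((k:ℝ) - k') * (1/(d:ℝ))) := by
          rw [← hqe, ← hxe]; ring
        have hstep : (1:ℝ) * (1/(d:ℝ)) ≤ ((k:ℝ) - (k':ℝ)) * (1/(d:ℝ)) :=
          mul_le_mul_of_nonneg_right (by linarith) hε.le
        have hstep2 : (2:ℝ)^i' * ((1:ℝ) * (1/(d:ℝ))) ≤ 2^i' * (((k:ℝ) - (k':ℝ)) * (1/(d:ℝ))) :=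
          mul_le_mul_of_nonneg_left hstep hpi.le
        have h2d : (1/(d:ℝ)) * ((2:ℝ)^(i'-1)) * 2 = (1/(d:ℝ)) * 2^i' := by
          rw [← h2]; ring
        nlinarith [hstep2, h2d, mul_nonneg hε.le hpi1.le, this]
      · -- i' > i : contradiction
        exfalso
        have h1' : (2:ℝ)^(i+1) ≤ 2^i' := by
          apply zpow_le_zpow_right₀ (by norm_num) (by omega)
        have h2' : (2:ℝ)^(i+1) = 2^i * 2 := by
          rw [zpow_add_one₀ (by norm_num : (2:ℝ) ≠ 0) i]
        have hk'0 : (0:ℝ) ≤ (k':ℝ) * (1/(d:ℝ)) := by positivity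
        have : q < x := by
          rw [← hqe, ← hxe]
          nlinarith
        linarith
    have hqlt : q < 4 * 2^(i-1) := by
      rw [← hqe]; nlinarith
    nlinarith
  · have : (1/(d:ℝ))/4 ≤ 1 := by
      rw [div_le_one (by norm_num), div_le_iff₀ hd0]
      have h1d : (1:ℝ) ≤ d := by exact_mod_cast hd.le
      nlinarith
    nlinarith

theorem stmt13 (d : ℕ) (hd : 1 < d) (ℓ u : ℤ) (hlu : ℓ ≤ u)
    (k : ℕ) (q : Fin k → ℝ) (hq : ∀ j, q j ∈ Ptil d ℓ u)
    (qs : ℝ) (hqs : qs ∈ Ptil d ℓ u)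
    (h1 : nxt d ℓ u qs < ∑ j, q j) (h2 : ∑ j, q j ≤ qs) :
    ∑ j, nxt d ℓ u (q j) ≤ (∑ j, q j) - (1 / (d:ℝ)) / 4 * nxt d ℓ u qs := by
  have hd0 : (0:ℝ) < d := by exact_mod_cast Nat.lt_of_lt_of_le Nat.zero_lt_one hd.le
  have hc : (0:ℝ) < 1/(d:ℝ)/4 := by positivity
  have key : ∑ j, nxt d ℓ u (q j) ≤ (∑ j, q j) - 1/(d:ℝ)/4 * ∑ j, q j := by
    have : ∑ j, nxt d ℓ u (q j) ≤ ∑ j, (q j - 1/(d:ℝ)/4 * q j) :=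
      Finset.sum_le_sum fun j _ => nxt_le hd (hq j)
    calc ∑ j, nxt d ℓ u (q j) ≤ ∑ j, (q j - 1/(d:ℝ)/4 * q j) := this
      _ = (∑ j, q j) - 1/(d:ℝ)/4 * ∑ j, q j := by
          rw [Finset.sum_sub_distrib, Finset.mul_sum]
  nlinarith [mul_le_mul_of_nonneg_left h1.le hc.le]
end

section
/- In the machine covering game on identical machines, every jump-optimal (Nash equilibrium) assignment where the instance consists of 3 machines and jobs of sizes 2,2,2,3,3,80/17 that achieves minimum load 6 is unique up to machine symmetry, and in any schedule where none of these six jobs may be moved, adding arbitrarily small jobs of total size 22/17 yields minimum load at most 96/17 while the optimum is 6; hence the ratio is 17/16. -/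
set_option maxRecDepth 10000

def pz : Fin 6 → ℤ := ![34,34,34,51,51,80]

def loadz (S : Fin 6 → Fin 3) (i : Fin 3) : ℤ := ∑ j, if S j = i then pz j else 0

lemma dec1 : ∀ S : Fin 6 → Fin 3, ∃ i, loadz S i ≤ 85 := by decide

lemma dec2 : ∀ S : Fin 6 → Fin 3, ((∀ i, 85 ≤ loadz S i) ∧ (∃ i, loadz S i = 85)) →
    (loadz S 0 = 114 ∧ loadz S 1 = 85 ∧ loadz S 2 = 85) ∨
    (loadz S 0 = 85 ∧ loadz S 1 = 114 ∧ loadz S 2 = 85) ∨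
    (loadz S 0 = 85 ∧ loadz S 1 = 85 ∧ loadz S 2 = 114) := by decide

lemma key (S : Fin 6 → Fin 3) (i : Fin 3) :
    mload ![2, 2, 2, 3, 3, 80 / 17] S i = (loadz S i : ℝ) / 17 := by
  unfold mload loadz
  push_cast
  rw [Finset.sum_div]
  refine Finset.sum_congr rfl fun j _ => ?_
  fin_cases j <;> split <;> norm_num [pz]

lemma key' (S : Fin 6 → Fin 3) (i : Fin 3) (v : ℤ) (h : loadz S i = v) :
    mload ![2, 2, 2, 3, 3, 80 / 17] S i = (v : ℝ) / 17 := by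
  rw [key, h]

lemma opt_char (S : Fin 6 → Fin 3) (hS : mlmin ![2, 2, 2, 3, 3, (80:ℝ) / 17] S = 5) :
    (loadz S 0 = 114 ∧ loadz S 1 = 85 ∧ loadz S 2 = 85) ∨
    (loadz S 0 = 85 ∧ loadz S 1 = 114 ∧ loadz S 2 = 85) ∨
    (loadz S 0 = 85 ∧ loadz S 1 = 85 ∧ loadz S 2 = 114) := by
  apply dec2
  have h5 : ∀ i, (5:ℝ) ≤ mload ![2, 2, 2, 3, 3, (80:ℝ) / 17] S i := by
    intro i
    rw [← hS]
    exact Finset.inf'_le _ (Finset.mem_univ i)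
  obtain ⟨i0, -, hi0⟩ := Finset.exists_mem_eq_inf' (Finset.univ_nonempty)
    (mload ![2, 2, 2, 3, 3, (80:ℝ) / 17] S)
  constructor
  · intro i
    have := h5 i
    rw [key] at this
    have : (85:ℝ) ≤ (loadz S i : ℝ) := by linarith
    exact_mod_cast this
  · refine ⟨i0, ?_⟩
    have : mload ![2, 2, 2, 3, 3, (80:ℝ) / 17] S i0 = 5 := by
      rw [← hi0, ← hS]; rfl
    rw [key] at this
    have : (loadz S i0 : ℝ) = 85 := by linarith
    exact_mod_cast this

lemma hz1 : ∀ i, loadz ![0, 1, 2, 0, 1, 2] i = ![85, 85, 114] i := by decide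

lemma hz2 : ∀ i, loadz ![1, 1, 1, 0, 0, 2] i = ![102, 102, 80] i := by decide

theorem stmt16 (K : Type*) [Fintype K] (q : K → ℝ) (hq : ∀ x, 0 < q x)
    (hsum : ∑ x, q x = 22 / 17) :
    let p : Fin 6 → ℝ := ![2, 2, 2, 3, 3, 80 / 17]
    -- (a) the optimal minimum load of the six-job instance on three machines is 5
    (∀ S : Fin 6 → Fin 3, mlmin p S ≤ 5) ∧
    (∃ S : Fin 6 → Fin 3, mlmin p S = 5) ∧
    -- uniqueness up to machine symmetry: in any optimal schedule the loads are
    -- (114/17, 5, 5) up to permutation of the machines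
    (∀ S : Fin 6 → Fin 3, mlmin p S = 5 →
      ∃ σ : Equiv.Perm (Fin 3), ∀ i, mload p S (σ i) = ![(114:ℝ)/17, 5, 5] i) ∧
    -- (b) if the six original jobs keep an optimal assignment, then after adding the
    -- small jobs the minimum load is at most 96/17
    (∀ S' : Fin 6 ⊕ K → Fin 3, mlmin p (fun j => S' (Sum.inl j)) = 5 →
      mlmin (Sum.elim p q) S' ≤ 96 / 17) ∧
    -- reassigning everything achieves minimum load 6
    (∃ T : Fin 6 ⊕ K → Fin 3, mlmin (Sum.elim p q) T = 6) ∧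
    -- hence the ratio is 17/16
    (6 : ℝ) / (96 / 17) = 17 / 16 := by
  intro p
  have hq' : ∀ x, (0:ℝ) ≤ q x := fun x => (hq x).le
  -- splitting loads for sum types
  have split : ∀ (S' : Fin 6 ⊕ K → Fin 3) (i : Fin 3),
      mload (Sum.elim p q) S' i =
        mload p (fun j => S' (Sum.inl j)) i + mload q (fun k => S' (Sum.inr k)) i := by
    intro S' i
    unfold mload
    rw [Fintype.sum_sum_type]
    rfl
  refine ⟨?_, ?_, ?_, ?_, ?_, by norm_num⟩
  · -- (a) upper bound
    intro S
    obtain ⟨i, hi⟩ := dec1 S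
    have h1 : mlmin p S ≤ mload p S i := Finset.inf'_le _ (Finset.mem_univ i)
    have h2 : mload p S i ≤ 5 := by
      rw [key]
      have : (loadz S i : ℝ) ≤ 85 := by exact_mod_cast hi
      linarith
    linarith
  · -- (a) existence
    refine ⟨![0, 1, 2, 0, 1, 2], ?_⟩
    have hl : ∀ i : Fin 3, mload p ![0, 1, 2, 0, 1, 2] i = ((![85, 85, 114] i : ℤ) : ℝ) / 17 :=
      fun i => key' _ i _ (hz1 i)
    apply le_antisymm
    · calc mlmin p (![0, 1, 2, 0, 1, 2] : Fin 6 → Fin 3)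
            ≤ mload p (![0, 1, 2, 0, 1, 2] : Fin 6 → Fin 3) 0 :=
          Finset.inf'_le _ (Finset.mem_univ _)
        _ = 5 := by rw [hl 0]; norm_num
    · apply Finset.le_inf'
      intro i _
      rw [hl i]
      fin_cases i <;> norm_num
  · -- uniqueness
    intro S hS
    have m0' := key' S 0
    have m1' := key' S 1
    have m2' := key' S 2
    rcases opt_char S hS with ⟨h0, h1, h2⟩ | ⟨h0, h1, h2⟩ | ⟨h0, h1, h2⟩
    · refine ⟨Equiv.refl _, ?_⟩
      intro i
      fin_cases i
      · show mload p S 0 = 114 / 17; rw [m0' _ h0]; norm_num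
      · show mload p S 1 = 5; rw [m1' _ h1]; norm_num
      · show mload p S 2 = 5; rw [m2' _ h2]; norm_num
    · refine ⟨Equiv.swap 0 1, ?_⟩
      intro i
      fin_cases i
      · show mload p S 1 = 114 / 17; rw [m1' _ h1]; norm_num
      · show mload p S 0 = 5; rw [m0' _ h0]; norm_num
      · show mload p S 2 = 5; rw [m2' _ h2]; norm_num
    · refine ⟨Equiv.swap 0 2, ?_⟩
      intro i
      fin_cases i
      · show mload p S 2 = 114 / 17; rw [m2' _ h2]; norm_num
      · show mload p S 1 = 5; rw [m1' _ h1]; norm_num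
      · show mload p S 0 = 5; rw [m0' _ h0]; norm_num
  · -- (b) stays at most 96/17
    intro S' hS'
    set S : Fin 6 → Fin 3 := fun j => S' (Sum.inl j) with hSdef
    have main : ∀ b c : Fin 3, b ≠ c → loadz S b = 85 → loadz S c = 85 →
        mlmin (Sum.elim p q) S' ≤ 96 / 17 := by
      intro b c hbc hb hc
      have hpb : mload p S b = 5 := by rw [key' S b _ hb]; norm_num
      have hpc : mload p S c = 5 := by rw [key' S c _ hc]; norm_num
      have hqbc : mload q (fun k => S' (Sum.inr k)) b + mload q (fun k => S' (Sum.inr k)) c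
          ≤ 22 / 17 := by
        rw [← hsum]
        unfold mload
        rw [← Finset.sum_add_distrib]
        apply Finset.sum_le_sum
        intro k _
        have := hq' k
        split_ifs with hb' hc'
        · exact absurd (hb'.symm.trans hc') hbc
        · linarith
        · linarith
        · linarith
      have h1 : mlmin (Sum.elim p q) S' ≤ mload (Sum.elim p q) S' b :=
        Finset.inf'_le _ (Finset.mem_univ _)
      have h2 : mlmin (Sum.elim p q) S' ≤ mload (Sum.elim p q) S' c :=
        Finset.inf'_le _ (Finset.mem_univ _)
      rw [split S' b, hpb] at h1
      rw [split S' c, hpc] at h2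
      linarith
    rcases opt_char S hS' with ⟨h0, h1, h2⟩ | ⟨h0, h1, h2⟩ | ⟨h0, h1, h2⟩
    · exact main 1 2 (by decide) h1 h2
    · exact main 0 2 (by decide) h0 h2
    · exact main 0 1 (by decide) h0 h1
  · -- reassignment achieves 6
    refine ⟨Sum.elim ![1, 1, 1, 0, 0, 2] (fun _ => 2), ?_⟩
    have e1 : (fun j => Sum.elim (![1, 1, 1, 0, 0, 2] : Fin 6 → Fin 3) (fun _ : K => 2)
        (Sum.inl j)) = ![1, 1, 1, 0, 0, 2] := rfl
    have e2 : (fun k : K => Sum.elim (![1, 1, 1, 0, 0, 2] : Fin 6 → Fin 3) (fun _ => 2)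
        (Sum.inr k)) = fun _ => (2 : Fin 3) := rfl
    have hqpart : ∀ i : Fin 3, mload q (fun _ : K => (2 : Fin 3)) i =
        if (2 : Fin 3) = i then 22 / 17 else 0 := by
      intro i
      unfold mload
      split_ifs with h
      · simpa [h] using hsum
      · simp [h]
    have hl : ∀ i : Fin 3, mload (Sum.elim p q) (Sum.elim ![1, 1, 1, 0, 0, 2] (fun _ => 2)) i
        = 6 := by
      intro i
      rw [split, e1, e2, key' _ i _ (hz2 i), hqpart i]
      fin_cases i
      · rw [if_neg (by decide)]; norm_num
      · rw [if_neg (by decide)]; norm_num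
      · rw [if_pos (by decide : (2 : Fin 3) = (fun i => i) ⟨2, by norm_num⟩)]; norm_num
    apply le_antisymm
    · calc mlmin (Sum.elim p q) (Sum.elim ![1, 1, 1, 0, 0, 2] (fun _ => 2))
          ≤ mload (Sum.elim p q) (Sum.elim ![1, 1, 1, 0, 0, 2] (fun _ => 2)) 0 :=
          Finset.inf'_le _ (Finset.mem_univ _)
        _ = 6 := hl 0
    · apply Finset.le_inf'
      intro i _
      exact (hl i).ge
end

section
/- Monotonicity of LPT load profiles: for any job set J on m machines and any extra job j*, the sorted (non-decreasing) vector of machine loads produced by the LPT algorithm on J is coordinate-wise at most the sorted vector of machine loads produced by LPT on J ∪ {j*}. -/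
/-! Inserting a job `p* ≥ 0` into a non-increasing job list leaves the jobs before it untouched,
so the two runs of LPT share the profile `v` reached just before `p*`. One step of list
scheduling is monotone in the (sorted) profile it starts from, because the `k`-th order
statistic of a tuple is monotone under pointwise domination; and for sorted `v` it dominates
`v` itself. Hence the profile after `p*` dominates `v`, and this domination survives all the
remaining common steps. -/

/-- One step of LPT/list scheduling on the sorted load profile: add `p` to the first
(minimum) coordinate and re-sort non-decreasingly. -/
noncomputable def lptStep {m : ℕ} (hm : 0 < m) (v : Fin m → ℝ) (p : ℝ) : Fin m → ℝ :=
  let w := Function.update v ⟨0, hm⟩ (v ⟨0, hm⟩ + p)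
  fun k => w (Tuple.sort w k)

/-- The sorted load profile produced by list scheduling the jobs of `l` in order
(for `l` sorted non-increasingly this is the LPT load profile). -/
noncomputable def lptProfile {m : ℕ} (hm : 0 < m) (l : List ℝ) : Fin m → ℝ :=
  l.foldl (lptStep hm) (fun _ => 0)

open Finset

namespace Tuple

variable {n : ℕ} {α : Type*} [LinearOrder α]

theorem card_filter_comp_sort_le (f : Fin n → α) (a : α) :
    #{i | f (sort f i) ≤ a} = #{i | f i ≤ a} :=
  card_equiv (sort f) (by simp)

theorem comp_sort_mono {f g : Fin n → α} (h : f ≤ g) : f ∘ sort f ≤ g ∘ sort g := by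
  intro k
  -- The `k`-th entry of a sorted tuple is `≤ a` iff more than `k` entries are `≤ a`.
  set a := g (sort g k)
  have hg : k < #{i | g i ≤ a} := by
    rw [← card_filter_comp_sort_le]
    exact (lt_card_le_iff_apply_le_of_monotone (monotone_sort g)).2 le_rfl
  have hgf : #{i | g i ≤ a} ≤ #{i | f i ≤ a} :=
    card_le_card (monotone_filter_right _ fun i _ => (h i).trans)
  rw [← card_filter_comp_sort_le f] at hgf
  exact (lt_card_le_iff_apply_le_of_monotone (monotone_sort f)).1 (hg.trans_le hgf)

theorem le_comp_sort_of_le {f g : Fin n → α} (hf : Monotone f) (h : f ≤ g) :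
    f ≤ g ∘ sort g := by
  simpa [sort_eq_refl_iff_monotone.2 hf] using comp_sort_mono h

end Tuple

theorem List.Perm.exists_eq_append_cons_of_pairwise {α : Type*} {r : α → α → Prop}
    [Std.Antisymm r] {l l' : List α} {x : α} (h : l'.Perm (x :: l))
    (hl : l.Pairwise r) (hl' : l'.Pairwise r) :
    ∃ a b, l' = a ++ x :: b ∧ l = a ++ b := by
  obtain ⟨a, b, rfl⟩ := List.mem_iff_append.1 (h.mem_iff.2 List.mem_cons_self)
  have hab : (a ++ b).Pairwise r :=
    hl'.sublist ((List.append_sublist_append_left a).2 (List.sublist_cons_self x b))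
  have hperm : (a ++ b).Perm l := (List.perm_middle.symm.trans h).cons_inv
  exact ⟨a, b, rfl, (hperm.eq_of_pairwise' hab hl).symm⟩

section LPT

variable {m : ℕ} (hm : 0 < m)

theorem monotone_lptStep (v : Fin m → ℝ) (p : ℝ) : Monotone (lptStep hm v p) :=
  Tuple.monotone_sort _

theorem lptStep_mono_left (p : ℝ) : Monotone fun v : Fin m → ℝ => lptStep hm v p :=
  fun _ _ h => Tuple.comp_sort_mono
    (update_le_update_iff.2 ⟨add_le_add_left (h _) p, fun j _ => h j⟩)

theorem le_lptStep {v : Fin m → ℝ} (hv : Monotone v) {p : ℝ} (hp : 0 ≤ p) :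
    v ≤ lptStep hm v p :=
  Tuple.le_comp_sort_of_le hv (le_update_self_iff.2 (le_add_of_nonneg_right hp))

theorem monotone_lptProfile (l : List ℝ) : Monotone (lptProfile hm l) := by
  rcases l.eq_nil_or_concat with rfl | ⟨l, p, rfl⟩
  · exact monotone_const
  · rw [lptProfile, List.concat_eq_append, List.foldl_concat]
    exact monotone_lptStep hm _ _

theorem lptProfile_append_le_lptProfile_append_cons (a b : List ℝ) {p : ℝ} (hp : 0 ≤ p) :
    lptProfile hm (a ++ b) ≤ lptProfile hm (a ++ p :: b) := by
  simp only [lptProfile, List.foldl_append, List.foldl_cons]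
  exact List.foldl_monotone (lptStep_mono_left hm) b
    (le_lptStep hm (monotone_lptProfile hm a) hp)

end LPT

theorem stmt18_general {m : ℕ} (hm : 0 < m) (l l' : List ℝ) (pstar : ℝ)
    (hl : l.Pairwise (· ≥ ·)) (hl' : l'.Pairwise (· ≥ ·))
    (hperm : l'.Perm (pstar :: l))
    (hps : 0 ≤ pstar) :
    ∀ i, lptProfile hm l i ≤ lptProfile hm l' i := by
  obtain ⟨a, b, rfl, rfl⟩ := hperm.exists_eq_append_cons_of_pairwise hl hl'
  exact lptProfile_append_le_lptProfile_append_cons hm a b hps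

theorem stmt18 {m : ℕ} (hm : 0 < m) (l l' : List ℝ) (pstar : ℝ)
    (hl : l.Pairwise (· ≥ ·)) (hl' : l'.Pairwise (· ≥ ·))
    (hperm : l'.Perm (pstar :: l))
    (hpos : ∀ p ∈ l, 0 ≤ p) (hps : 0 ≤ pstar) :
    ∀ i, lptProfile hm l i ≤ lptProfile hm l' i :=
  stmt18_general hm l l' pstar hl hl' hperm hps
end

section
/- If x, y ∈ ℝ₊ⁿ are non-decreasing with x ≤ y coordinate-wise, and p ≥ 0, then the vectors obtained by adding p to the first (minimum) coordinate of x and of y respectively, and re-sorting non-decreasingly, still satisfy x' ≤ y' coordinate-wise. -/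
lemma sort_mono_of_le {m : ℕ} (f g : Fin m → ℝ) (hfg : ∀ i, f i ≤ g i) :
    ∀ k, (f ∘ Tuple.sort f) k ≤ (g ∘ Tuple.sort g) k := by
  intro k
  by_contra h
  push_neg at h
  set t := (f ∘ Tuple.sort f) k with ht
  have hA : (Finset.Iic k).image (Tuple.sort g) ⊆ Finset.univ.filter (fun i => f i < t) := by
    intro i hi
    simp only [Finset.mem_image, Finset.mem_Iic] at hi
    obtain ⟨j, hj, rfl⟩ := hi
    have : (g ∘ Tuple.sort g) j ≤ (g ∘ Tuple.sort g) k := Tuple.monotone_sort g hj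
    simp only [Finset.mem_filter, Finset.mem_univ, true_and]
    exact lt_of_le_of_lt (le_trans (hfg _) this) h
  have hB : Finset.univ.filter (fun i => f i < t) ⊆ (Finset.Iio k).image (Tuple.sort f) := by
    intro i hi
    simp only [Finset.mem_filter, Finset.mem_univ, true_and] at hi
    simp only [Finset.mem_image, Finset.mem_Iio]
    refine ⟨(Tuple.sort f).symm i, ?_, by simp⟩
    by_contra hlt
    push_neg at hlt
    have := Tuple.monotone_sort f hlt
    simp only [Function.comp_apply, Equiv.apply_symm_apply] at this
    exact absurd (lt_of_le_of_lt this hi) (lt_irrefl _)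
  have h1 : ((Finset.Iic k).image (Tuple.sort g)).card = k + 1 := by
    rw [Finset.card_image_of_injective _ (Tuple.sort g).injective]
    simp [Nat.card_Iic]
  have h2 : ((Finset.Iio k).image (Tuple.sort f)).card ≤ (k : ℕ) := by
    rw [Finset.card_image_of_injective _ (Tuple.sort f).injective]
    simp [Nat.card_Iio]
  have := le_trans (Finset.card_le_card (hA.trans hB)) h2
  omega

theorem stmt19 {n : ℕ} (x y : Fin (n + 1) → ℝ) (hx0 : ∀ k, 0 ≤ x k)
    (hx : Monotone x) (hy : Monotone y) (hxy : ∀ k, x k ≤ y k)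
    (p : ℝ) (hp : 0 ≤ p) :
    ∀ k, (Function.update x 0 (x 0 + p) ∘ Tuple.sort (Function.update x 0 (x 0 + p))) k
      ≤ (Function.update y 0 (y 0 + p) ∘ Tuple.sort (Function.update y 0 (y 0 + p))) k := by
  apply sort_mono_of_le
  intro i
  rcases eq_or_ne i 0 with rfl | hi
  · simp [Function.update_self]
    linarith [hxy 0]
  · simp [Function.update_of_ne hi]
    exact hxy i
end
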